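/- Let (M,L) be a regular symplectic 2n×2n pair of index at most one at infinity, with U₀, U_∞ ∈ ℂ^{2n×ℓ}, U₁ ∈ ℂ^{2n×2n̂} (ℓ = n − n̂) such that M U₀ = 0, L U_∞ = 0, M U₁ = L U₁ Ŝ for an invertible Ŝ, [U₁ | U₀, U_∞]^H J_n [U₁ | U₀, U_∞] = J_{n̂} ⊕ J_ℓ. Given a family of nonsingular Φ^ε ∈ ℂ^{ℓ×ℓ} with ‖Φ^ε‖ ≤ ε, set ΔM^ε = −L U₀ (Φ^ε)^H U_∞^H J and ΔL^ε = M U_∞ Φ^ε U₀^H J, and M^ε = M + ΔM^ε, L^ε = L + ΔL^ε. Then (M^ε, L^ε) is a regular symplectic pair with L^ε invertible, and M^ε U₀ = L^ε U₀ (Φ^ε)^H, M^ε U_∞ Φ^ε = L^ε U_∞, M^ε U₁ = L^ε U₁ Ŝ. -/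

import Mathlib

/-!
Put `W = [U₁ | U₀, U∞]` and `T = [L U₁ | L U₀, M U∞]`. The normalization makes `W` invertible
(after reindexing its columns), and its rows `U₀ᴴ J W`, `U∞ᴴ J W` turn the defining relations into
`(M - λL) W = T · diag(Ŝ - λ, -λ, 1)`, `Lᵉ W = T · diag(1, 1, Φ)` and `Mᵉ W = T · diag(Ŝ, Φᴴ, 1)`.
Regularity of `(M, L)` at a single `λ` therefore makes `T` invertible, hence `Lᵉ` and `Mᵉ` are
invertible and `(Mᵉ, Lᵉ)` is regular at `λ = 0`. Symplecticity survives the perturbation because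
it only needs `U₀` and `U∞` to span `J`-isotropic subspaces.
-/

open Matrix

attribute [local instance] Matrix.normedAddCommGroup

/-- The matrix `J_m = [[0, I_m], [−I_m, 0]]`. -/
def Jmat (m : ℕ) : Matrix (Fin m ⊕ Fin m) (Fin m ⊕ Fin m) ℂ :=
  Matrix.fromBlocks 0 1 (-1) 0

lemma Jmat_mul_Jmat (m : ℕ) : Jmat m * Jmat m = -1 := by
  ext (i|i) (j|j) <;> simp [Jmat, fromBlocks_multiply, one_apply]

lemma Jmat_conjTranspose (m : ℕ) : (Jmat m)ᴴ = -Jmat m := by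
  ext (i|i) (j|j) <;> simp [Jmat, one_apply, eq_comm]

lemma det_Jmat_ne_zero (m : ℕ) : (Jmat m).det ≠ 0 := by
  have h := congrArg det (Jmat_mul_Jmat m)
  rw [det_mul, det_neg, det_one, mul_one] at h
  exact left_ne_zero_of_mul (h ▸ (isUnit_neg_one.pow _).ne_zero)

section Blocks

variable {R : Type*} [Ring R] [Star R] {m k₁ k₂ k₃ k₄ : Type*} [Fintype m]

lemma fromCols_conjTranspose_mul_mul_fromCols (G : Matrix m m R) (A : Matrix m k₁ R)
    (B : Matrix m k₂ R) (C : Matrix m k₃ R) (D : Matrix m k₄ R) :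
    (fromCols A B)ᴴ * G * fromCols C D =
      fromBlocks (Aᴴ * G * C) (Aᴴ * G * D) (Bᴴ * G * C) (Bᴴ * G * D) := by
  rw [conjTranspose_fromCols_eq_fromRows_conjTranspose, fromRows_mul, fromRows_mul_fromCols]

lemma fromCols_conjTranspose_mul_mul (G : Matrix m m R) (A : Matrix m k₁ R)
    (B : Matrix m k₂ R) (C : Matrix m k₃ R) :
    (fromCols A B)ᴴ * G * C = fromRows (Aᴴ * G * C) (Bᴴ * G * C) := by
  rw [conjTranspose_fromCols_eq_fromRows_conjTranspose, fromRows_mul, fromRows_mul]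

lemma normalization_relations [DecidableEq k₂] {G : Matrix m m R} {U₁ : Matrix m k₁ R}
    {U₀ Uinf : Matrix m k₂ R} {C : Matrix k₁ k₁ R}
    (h : (fromCols U₁ (fromCols U₀ Uinf))ᴴ * G * fromCols U₁ (fromCols U₀ Uinf) =
      fromBlocks C 0 0 (fromBlocks 0 1 (-1) 0)) :
    U₀ᴴ * G * U₀ = 0 ∧ U₀ᴴ * G * Uinf = 1 ∧ Uinfᴴ * G * U₀ = -1 ∧ Uinfᴴ * G * Uinf = 0 ∧
      U₀ᴴ * G * U₁ = 0 ∧ Uinfᴴ * G * U₁ = 0 := by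
  rw [fromCols_conjTranspose_mul_mul_fromCols, fromCols_conjTranspose_mul_mul_fromCols,
    fromCols_conjTranspose_mul_mul, ← fromRows_zero, fromBlocks_inj, fromBlocks_inj,
    fromRows_inj.eq_iff] at h
  tauto

end Blocks

section SquareReindex

variable {R : Type*} [CommRing R] {m κ : Type*} [Fintype m] [DecidableEq m] [Fintype κ]
  [DecidableEq κ] (e : κ ≃ m)

lemma det_mul_det_submatrix_eq_of_mul_eq {A : Matrix m m R} {W T : Matrix m κ R}
    {D : Matrix κ κ R} (h : A * W = T * D) :
    A.det * (W.submatrix id e.symm).det = (T.submatrix id e.symm).det * D.det := by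
  have h' := congrArg (fun X => (X.submatrix id e.symm).det) h
  rwa [submatrix_mul A W id id e.symm Function.bijective_id,
    submatrix_mul T D id e.symm e.symm e.symm.bijective, submatrix_id_id, det_mul, det_mul,
    det_submatrix_equiv_self] at h'

lemma det_submatrix_ne_zero_of_conjTranspose_mul_mul_eq [StarRing R] {W : Matrix m κ R}
    {G : Matrix m m R} {C : Matrix κ κ R} (h : Wᴴ * G * W = C) (hC : C.det ≠ 0) :
    (W.submatrix id e.symm).det ≠ 0 := by
  have h' := congrArg (fun X => (X.submatrix e.symm e.symm).det) h
  simp only [submatrix_mul _ _ e.symm id e.symm Function.bijective_id,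
    submatrix_mul _ _ e.symm id id Function.bijective_id, submatrix_id_id, det_mul,
    ← conjTranspose_submatrix, det_submatrix_equiv_self] at h'
  exact right_ne_zero_of_mul (h' ▸ hC)

lemma det_submatrix_ne_zero_of_mul_eq [NoZeroDivisors R] {A : Matrix m m R}
    {W T : Matrix m κ R} {D : Matrix κ κ R} (h : A * W = T * D) (hA : A.det ≠ 0)
    (hW : (W.submatrix id e.symm).det ≠ 0) : (T.submatrix id e.symm).det ≠ 0 :=
  left_ne_zero_of_mul <| by rw [← det_mul_det_submatrix_eq_of_mul_eq e h]; exact mul_ne_zero hA hW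

lemma det_ne_zero_of_mul_eq [NoZeroDivisors R] {A : Matrix m m R} {W T : Matrix m κ R}
    {D : Matrix κ κ R} (h : A * W = T * D) (hT : (T.submatrix id e.symm).det ≠ 0) (hD : D.det ≠ 0) :
    A.det ≠ 0 :=
  left_ne_zero_of_mul <| by rw [det_mul_det_submatrix_eq_of_mul_eq e h]; exact mul_ne_zero hT hD

end SquareReindex

lemma mul_fromCols_fromCols_eq {R : Type*} [Semiring R] {m k₁ k₂ k₃ l₁ l₂ l₃ : Type*}
    [Fintype m] [Fintype l₁] [Fintype l₂] [Fintype l₃] {A : Matrix m m R}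
    {X : Matrix m k₁ R} {Y : Matrix m k₂ R} {Z : Matrix m k₃ R} {P : Matrix m l₁ R}
    {Q : Matrix m l₂ R} {S : Matrix m l₃ R} {D₁ : Matrix l₁ k₁ R} {D₂ : Matrix l₂ k₂ R}
    {D₃ : Matrix l₃ k₃ R} (hX : A * X = P * D₁) (hY : A * Y = Q * D₂) (hZ : A * Z = S * D₃) :
    A * fromCols X (fromCols Y Z) =
      fromCols P (fromCols Q S) * fromBlocks D₁ 0 0 (fromBlocks D₂ 0 0 D₃) := by
  simp only [mul_fromCols, fromCols_mul_fromBlocks, Matrix.mul_zero, add_zero, zero_add, hX, hY,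
    hZ]

lemma perturbed_pair_symplectic {R : Type*} [Ring R] [StarRing R] {m k : Type*} [Fintype m]
    [DecidableEq m] [Fintype k] {J M L : Matrix m m R} (hJ : Jᴴ = -J) (hJJ : J * J = -1)
    (hsymp : M * J * Mᴴ = L * J * Lᴴ) {X Y : Matrix m k R} (hX : Xᴴ * J * X = 0)
    (hY : Yᴴ * J * Y = 0) (Ψ : Matrix k k R) :
    (M - L * X * Ψᴴ * Yᴴ * J) * J * (M - L * X * Ψᴴ * Yᴴ * J)ᴴ =
      (L + M * Y * Ψ * Xᴴ * J) * J * (L + M * Y * Ψ * Xᴴ * J)ᴴ := by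
  have hJJ' : ∀ V : Matrix m m R, J * (J * V) = -V := fun V => by
    rw [← Matrix.mul_assoc, hJJ, Matrix.neg_mul, Matrix.one_mul]
  have hX' : ∀ V : Matrix k m R, Xᴴ * (J * (X * V)) = 0 := fun V => by
    rw [← Matrix.mul_assoc, ← Matrix.mul_assoc, hX, Matrix.zero_mul]
  have hY' : ∀ V : Matrix k m R, Yᴴ * (J * (Y * V)) = 0 := fun V => by
    rw [← Matrix.mul_assoc, ← Matrix.mul_assoc, hY, Matrix.zero_mul]
  have hsymp' : M * (J * Mᴴ) = L * (J * Lᴴ) := by simpa only [Matrix.mul_assoc] using hsymp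
  simp only [conjTranspose_sub, conjTranspose_add, conjTranspose_mul, hJ,
    conjTranspose_conjTranspose, Matrix.mul_sub, Matrix.sub_mul, Matrix.mul_add, Matrix.add_mul,
    Matrix.mul_assoc, Matrix.mul_neg, Matrix.neg_mul, hJJ', hX', hY', Matrix.mul_zero,
    hsymp']
  abel

section PerturbedPair

variable {R : Type*} [Ring R] [Star R] {m k k₁ : Type*} [Fintype m] [Fintype k]
  [DecidableEq k] {J M L : Matrix m m R} {U₀ Uinf : Matrix m k R} {U₁ : Matrix m k₁ R}
  (Φ : Matrix k k R)

lemma perturbedM_mul_columns [Fintype k₁] {Sh : Matrix k₁ k₁ R} (hU₀ : M * U₀ = 0)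
    (hU₁ : M * U₁ = L * U₁ * Sh) (h0 : Uinfᴴ * J * U₀ = -1) (hinf : Uinfᴴ * J * Uinf = 0)
    (h1 : Uinfᴴ * J * U₁ = 0) :
    (M - L * U₀ * Φᴴ * Uinfᴴ * J) * U₀ = L * U₀ * Φᴴ ∧
      (M - L * U₀ * Φᴴ * Uinfᴴ * J) * Uinf = M * Uinf ∧
      (M - L * U₀ * Φᴴ * Uinfᴴ * J) * U₁ = L * U₁ * Sh := by
  simp only [Matrix.mul_assoc] at h0 hinf h1 hU₁ ⊢
  refine ⟨?_, ?_, ?_⟩ <;> simp [Matrix.sub_mul, Matrix.mul_assoc, hU₀, hU₁, h0, hinf, h1]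

lemma perturbedL_mul_columns (hUinf : L * Uinf = 0) (h0 : U₀ᴴ * J * U₀ = 0)
    (hinf : U₀ᴴ * J * Uinf = 1) (h1 : U₀ᴴ * J * U₁ = 0) :
    (L + M * Uinf * Φ * U₀ᴴ * J) * U₀ = L * U₀ ∧
      (L + M * Uinf * Φ * U₀ᴴ * J) * Uinf = M * Uinf * Φ ∧
      (L + M * Uinf * Φ * U₀ᴴ * J) * U₁ = L * U₁ := by
  simp only [Matrix.mul_assoc] at h0 hinf h1 ⊢
  refine ⟨?_, ?_, ?_⟩ <;> simp [Matrix.add_mul, Matrix.mul_assoc, hUinf, h0, hinf, h1]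

end PerturbedPair

theorem perturbed_symplectic_pair_general {n nh ℓ : ℕ} (hn : nh + ℓ = n)
    (M L : Matrix (Fin n ⊕ Fin n) (Fin n ⊕ Fin n) ℂ)
    (hreg : ∃ lam : ℂ, (M - lam • L).det ≠ 0)
    (hsymp : M * Jmat n * Mᴴ = L * Jmat n * Lᴴ)
    (U₀ Uinf : Matrix (Fin n ⊕ Fin n) (Fin ℓ) ℂ)
    (U₁ : Matrix (Fin n ⊕ Fin n) (Fin nh ⊕ Fin nh) ℂ)
    (Sh : Matrix (Fin nh ⊕ Fin nh) (Fin nh ⊕ Fin nh) ℂ) (hSh : IsUnit Sh.det)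
    (hU₀ : M * U₀ = 0) (hUinf : L * Uinf = 0) (hU₁ : M * U₁ = L * U₁ * Sh)
    (hnorm : (Matrix.fromCols U₁ (Matrix.fromCols U₀ Uinf))ᴴ * Jmat n *
        Matrix.fromCols U₁ (Matrix.fromCols U₀ Uinf) =
      Matrix.fromBlocks (Jmat nh) 0 0 (Jmat ℓ))
    (Φ : Matrix (Fin ℓ) (Fin ℓ) ℂ) (hΦ : IsUnit Φ.det)
    (Mε Lε : Matrix (Fin n ⊕ Fin n) (Fin n ⊕ Fin n) ℂ)
    (hMε : Mε = M - L * U₀ * Φᴴ * Uinfᴴ * Jmat n)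
    (hLε : Lε = L + M * Uinf * Φ * U₀ᴴ * Jmat n) :
    Mε * Jmat n * Mεᴴ = Lε * Jmat n * Lεᴴ ∧
    (∃ lam : ℂ, (Mε - lam • Lε).det ≠ 0) ∧
    IsUnit Lε.det ∧
    Mε * U₀ = Lε * U₀ * Φᴴ ∧
    Mε * Uinf * Φ = Lε * Uinf ∧
    Mε * U₁ = Lε * U₁ * Sh := by
  subst hMε hLε
  obtain ⟨k00, k0i, ki0, kii, k01, ki1⟩ := normalization_relations hnorm
  obtain ⟨hm0, hmi, hm1⟩ := perturbedM_mul_columns Φ hU₀ hU₁ ki0 kii ki1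
  obtain ⟨hl0, hli, hl1⟩ := perturbedL_mul_columns Φ hUinf k00 k0i k01
  obtain ⟨lam, hlam⟩ := hreg
  let e : (Fin nh ⊕ Fin nh) ⊕ (Fin ℓ ⊕ Fin ℓ) ≃ Fin n ⊕ Fin n :=
    Fintype.equivOfCardEq (by simp only [Fintype.card_sum, Fintype.card_fin]; omega)
  have hW := det_submatrix_ne_zero_of_conjTranspose_mul_mul_eq e hnorm
    (by simp [det_fromBlocks_zero₂₁, det_Jmat_ne_zero])
  have hpencil₁ : (M - lam • L) * U₁ = L * U₁ * (Sh - lam • 1) := by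
    simp [Matrix.sub_mul, Matrix.mul_sub, hU₁]
  have hpencil₀ : (M - lam • L) * U₀ = L * U₀ * (-lam • 1 : Matrix (Fin ℓ) (Fin ℓ) ℂ) := by
    simp [Matrix.sub_mul, hU₀]
  have hpencilInf : (M - lam • L) * Uinf = M * Uinf * (1 : Matrix (Fin ℓ) (Fin ℓ) ℂ) := by
    simp [Matrix.sub_mul, hUinf]
  have hT := det_submatrix_ne_zero_of_mul_eq e
    (mul_fromCols_fromCols_eq hpencil₁ hpencil₀ hpencilInf) hlam hW
  have hLdet := det_ne_zero_of_mul_eq e (mul_fromCols_fromCols_eq (D₁ := 1) (D₂ := 1)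
    (by rw [hl1, Matrix.mul_one]) (by rw [hl0, Matrix.mul_one]) hli) hT
    (by simp [det_fromBlocks_zero₂₁, hΦ.ne_zero])
  have hMdet := det_ne_zero_of_mul_eq e (mul_fromCols_fromCols_eq (D₃ := 1) hm1 hm0
    (by rw [hmi, Matrix.mul_one])) hT (by simp [det_fromBlocks_zero₂₁, hΦ.ne_zero, hSh.ne_zero])
  refine ⟨?_, ⟨0, by simpa using hMdet⟩, hLdet.isUnit, by rw [hm0, hl0], by rw [hmi, hli],
    by rw [hm1, hl1]⟩
  exact perturbed_pair_symplectic (Jmat_conjTranspose n) (Jmat_mul_Jmat n) hsymp k00 kii Φ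

/-- Theorem 2.7: perturbation of a regular symplectic pair.  Given the spectral data
`M U₀ = 0`, `L U∞ = 0`, `M U₁ = L U₁ Sh` with `Sh` invertible and the normalization
`[U₁ | U₀, U∞]ᴴ J [U₁ | U₀, U∞] = J_{nh} ⊕ J_ℓ`, for any nonsingular `Φ` with `‖Φ‖ ≤ ε`
the perturbed pair `(Mᵉ, Lᵉ) = (M − L U₀ Φᴴ U∞ᴴ J, L + M U∞ Φ U₀ᴴ J)` is a regular
symplectic pair with `Lᵉ` invertible, and
`Mᵉ U₀ = Lᵉ U₀ Φᴴ`, `Mᵉ U∞ Φ = Lᵉ U∞`, `Mᵉ U₁ = Lᵉ U₁ Sh`. -/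
theorem perturbed_symplectic_pair {n nh ℓ : ℕ} (hn : nh + ℓ = n)
    (M L : Matrix (Fin n ⊕ Fin n) (Fin n ⊕ Fin n) ℂ)
    (hreg : ∃ lam : ℂ, (M - lam • L).det ≠ 0)
    (hsymp : M * Jmat n * Mᴴ = L * Jmat n * Lᴴ)
    (U₀ Uinf : Matrix (Fin n ⊕ Fin n) (Fin ℓ) ℂ)
    (U₁ : Matrix (Fin n ⊕ Fin n) (Fin nh ⊕ Fin nh) ℂ)
    (Sh : Matrix (Fin nh ⊕ Fin nh) (Fin nh ⊕ Fin nh) ℂ) (hSh : IsUnit Sh.det)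
    (hU₀ : M * U₀ = 0) (hUinf : L * Uinf = 0) (hU₁ : M * U₁ = L * U₁ * Sh)
    (hnorm : (Matrix.fromCols U₁ (Matrix.fromCols U₀ Uinf))ᴴ * Jmat n *
        Matrix.fromCols U₁ (Matrix.fromCols U₀ Uinf) =
      Matrix.fromBlocks (Jmat nh) 0 0 (Jmat ℓ))
    (ε : ℝ) (hε : 0 < ε)
    (Φ : Matrix (Fin ℓ) (Fin ℓ) ℂ) (hΦ : IsUnit Φ.det) (hΦε : ‖Φ‖ ≤ ε)
    (Mε Lε : Matrix (Fin n ⊕ Fin n) (Fin n ⊕ Fin n) ℂ)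
    (hMε : Mε = M - L * U₀ * Φᴴ * Uinfᴴ * Jmat n)
    (hLε : Lε = L + M * Uinf * Φ * U₀ᴴ * Jmat n) :
    Mε * Jmat n * Mεᴴ = Lε * Jmat n * Lεᴴ ∧
    (∃ lam : ℂ, (Mε - lam • Lε).det ≠ 0) ∧
    IsUnit Lε.det ∧
    Mε * U₀ = Lε * U₀ * Φᴴ ∧
    Mε * Uinf * Φ = Lε * Uinf ∧
    Mε * U₁ = Lε * U₁ * Sh :=
  perturbed_symplectic_pair_general hn M L hreg hsymp U₀ Uinf U₁ Sh hSh hU₀ hUinf hU₁ hnorm Φ hΦ Mε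
    Lε hMε hLε
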